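/- arXiv:math/0609357 — 7 statements merged into one kernel-verified Lean document; each statement's English description precedes it below -/
import Mathlib

section
/- Let A ⊆ X. If the weak omega-limit ω_w(A) is strongly compact and uniformly strongly attracts A, then ω_s(A) = ω_w(A). -/
open Set Filter Topology

/-- The topology induced by a metric structure `m` on `X`. -/
def mtop {X : Type*} (m : MetricSpace X) : TopologicalSpace X :=
  m.toPseudoMetricSpace.toUniformSpace.toTopologicalSpace

/-- An evolutionary system: for each `T : ℝ`, `E T` is the set of trajectories on `[T, ∞)`
(modeled as functions `ℝ → X`), with translation and restriction properties. -/
structure EvolSys (X : Type*) where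
  E : ℝ → Set (ℝ → X)
  nonempty : (E 0).Nonempty
  translate : ∀ T s : ℝ, E (T + s) = {u | (fun t => u (t + s)) ∈ E T}
  restrict : ∀ T T' : ℝ, T ≤ T' → E T ⊆ E T'

/-- Complete trajectories. -/
def EvolSys.Einf {X : Type*} (ES : EvolSys X) : Set (ℝ → X) := {u | ∀ T : ℝ, u ∈ ES.E T}

/-- `R t A = {u t : u 0 ∈ A, u ∈ E([0,∞))}`. -/
def EvolSys.R {X : Type*} (ES : EvolSys X) (t : ℝ) (A : Set X) : Set X :=
  {x | ∃ u ∈ ES.E 0, u 0 ∈ A ∧ u t = x}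

/-- `R̃ t A = {u t : u 0 ∈ A, u ∈ E((-∞,∞))}`. -/
def EvolSys.Rt {X : Type*} (ES : EvolSys X) (t : ℝ) (A : Set X) : Set X :=
  {x | ∃ u ∈ ES.Einf, u 0 ∈ A ∧ u t = x}

/-- The omega-limit of `A` with respect to the metric `m`. -/
def omegaLim {X : Type*} (m : MetricSpace X) (ES : EvolSys X) (A : Set X) : Set X :=
  ⋂ T ∈ Ici (0:ℝ), @closure X (mtop m) (⋃ t ∈ Ici T, ES.R t A)

/-- `P` uniformly attracts `A` in the metric `m`. -/
def attracts {X : Type*} (m : MetricSpace X) (ES : EvolSys X) (P A : Set X) : Prop :=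
  ∀ ε > (0:ℝ), ∃ t₀ : ℝ, ∀ t ≥ t₀, ∀ x ∈ ES.R t A, ∃ p ∈ P, m.dist x p < ε

/-- `P` is an attracting set in the metric `m`. -/
def isAttracting {X : Type*} (m : MetricSpace X) (ES : EvolSys X) (P : Set X) : Prop :=
  attracts m ES P univ

/-- A global attractor in metric `m`: a minimal closed attracting set. -/
def isGlobalAttractor {X : Type*} (m : MetricSpace X) (ES : EvolSys X) (A : Set X) : Prop :=
  @IsClosed X (mtop m) A ∧ isAttracting m ES A ∧
    ∀ B ⊆ A, @IsClosed X (mtop m) B → isAttracting m ES B → B = A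

/-- Asymptotic compactness with respect to the strong metric `ms`. -/
def asympCompact {X : Type*} (ms : MetricSpace X) (ES : EvolSys X) : Prop :=
  ∀ (t : ℕ → ℝ) (x : ℕ → X), Tendsto t atTop atTop →
    (∀ n, x n ∈ ES.R (t n) univ) →
    ∃ (φ : ℕ → ℕ) (y : X), StrictMono φ ∧
      Tendsto (fun n => ms.dist (x (φ n)) y) atTop (𝓝 0)

/-- Quasi-invariance of `A`: through every point of `A` passes a complete trajectory
lying in `A`. -/
def quasiInvariant {X : Type*} (ES : EvolSys X) (A : Set X) : Prop :=
  ∀ a ∈ A, ∃ u ∈ ES.Einf, u 0 = a ∧ ∀ t : ℝ, u t ∈ A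

/-- Condition A1: `E([0,∞))` is (sequentially) compact in `C([0,∞); X_w)`, i.e. every
sequence of trajectories has a subsequence converging, uniformly in `d_w` on every
compact subinterval of `[0,∞)`, to a trajectory. -/
def A1cond {X : Type*} (mw : MetricSpace X) (ES : EvolSys X) : Prop :=
  ∀ u : ℕ → ℝ → X, (∀ n, u n ∈ ES.E 0) →
    ∃ (φ : ℕ → ℕ) (v : ℝ → X), StrictMono φ ∧ v ∈ ES.E 0 ∧
      ∀ T > (0:ℝ), ∀ ε > (0:ℝ), ∃ N : ℕ, ∀ n ≥ N, ∀ s ∈ Icc (0:ℝ) T,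
        mw.dist (u (φ n) s) (v s) < ε

/-- The metric of `C([a,∞); X_w)`. -/
noncomputable def dC {X : Type*} (mw : MetricSpace X) (a : ℝ) (u v : ℝ → X) : ℝ :=
  ∑' T : ℕ, (1/2 : ℝ)^T *
    (sSup ((fun t => mw.dist (u t) (v t)) '' Icc a (a + T)) /
     (1 + sSup ((fun t => mw.dist (u t) (v t)) '' Icc a (a + T))))

private lemma aux_one_div : Tendsto (fun n : ℕ => 1 / ((n : ℝ) + 1)) atTop (𝓝 0) :=
  tendsto_one_div_add_atTop_nhds_zero_nat

private lemma aux_eventually_lt {f : ℕ → ℝ} (hf : ∀ n, 0 ≤ f n)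
    (h : Tendsto f atTop (𝓝 0)) {ε : ℝ} (hε : 0 < ε) :
    ∃ N : ℕ, ∀ n ≥ N, f n < ε := by
  obtain ⟨N, hN⟩ := (Metric.tendsto_atTop.mp h) ε hε
  exact ⟨N, fun n hn => by
    have := hN n hn
    rwa [Real.dist_eq, sub_zero, abs_of_nonneg (hf n)] at this⟩

private lemma aux_closure_sub {X : Type*} (ms mw : MetricSpace X)
    (hsw : ∀ u v : ℕ → X,
      Tendsto (fun n => ms.dist (u n) (v n)) atTop (𝓝 0) →
      Tendsto (fun n => mw.dist (u n) (v n)) atTop (𝓝 0))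
    (S : Set X) : @closure X (mtop ms) S ⊆ @closure X (mtop mw) S := by
  intro x hx
  have h1 : ∀ ε > (0:ℝ), ∃ b ∈ S, ms.dist x b < ε :=
    (@Metric.mem_closure_iff X ms.toPseudoMetricSpace S x).mp hx
  refine (@Metric.mem_closure_iff X mw.toPseudoMetricSpace S x).mpr ?_
  intro ε hε
  choose y hyS hyd using fun n : ℕ => h1 (1 / (n + 1)) (by positivity)
  have hts : Tendsto (fun n => ms.dist x (y n)) atTop (𝓝 0) :=
    squeeze_zero (fun n => (@dist_nonneg X ms.toPseudoMetricSpace _ _)) (fun n => (hyd n).le) aux_one_div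
  have h2 := hsw (fun _ => x) y hts
  obtain ⟨N, hN⟩ := aux_eventually_lt (fun n => (@dist_nonneg X mw.toPseudoMetricSpace _ _)) h2 hε
  exact ⟨y N, hyS N, hN N le_rfl⟩

private lemma aux_compact_subseq {X : Type*} [MetricSpace X] {K : Set X}
    (hK : IsCompact K) (p : ℕ → X) (hp : ∀ n, p n ∈ K) :
    ∃ q ∈ K, ∃ φ : ℕ → ℕ, StrictMono φ ∧
      Tendsto (fun n => dist (p (φ n)) q) atTop (𝓝 0) := by
  obtain ⟨q, hqK, φ, hφ, hlim⟩ := hK.tendsto_subseq hp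
  exact ⟨q, hqK, φ, hφ, tendsto_iff_dist_tendsto_zero.mp hlim⟩

theorem stmt3 {X : Type*} (ms mw : MetricSpace X) (ES : EvolSys X)
    (hXw : @IsCompact X (mtop mw) Set.univ)
    (hsw : ∀ u v : ℕ → X,
      Tendsto (fun n => ms.dist (u n) (v n)) atTop (𝓝 0) →
      Tendsto (fun n => mw.dist (u n) (v n)) atTop (𝓝 0))
    (A : Set X)
    (hcomp : @IsCompact X (mtop ms) (omegaLim mw ES A))
    (hattr : attracts ms ES (omegaLim mw ES A) A) :
    omegaLim ms ES A = omegaLim mw ES A := by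
  apply Subset.antisymm
  · -- strong omega-limit ⊆ weak omega-limit
    intro x hx
    rw [omegaLim, mem_iInter₂] at hx ⊢
    intro T hT
    exact aux_closure_sub ms mw hsw _ (hx T hT)
  · -- weak omega-limit ⊆ strong omega-limit
    intro x hx
    set K := omegaLim mw ES A with hK
    have hxT : ∀ T : ℝ, T ∈ Ici (0:ℝ) →
        x ∈ @closure X (mtop mw) (⋃ t ∈ Ici T, ES.R t A) := mem_iInter₂.mp hx
    -- choose a sequence y n ∈ R (s n) A with s n ≥ n weakly converging to x
    have hy : ∀ n : ℕ, ∃ y : X, ∃ s : ℝ, (n : ℝ) ≤ s ∧ y ∈ ES.R s A ∧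
        mw.dist x y < 1 / (n + 1) := by
      intro n
      have hmem := (@Metric.mem_closure_iff X mw.toPseudoMetricSpace _ x).mp
        (hxT (n : ℝ) (by simp)) (1 / (n + 1)) (by positivity)
      obtain ⟨b, hbU, hbd⟩ := hmem
      rw [mem_iUnion₂] at hbU
      obtain ⟨t, ht, hbt⟩ := hbU
      exact ⟨b, t, ht, hbt, hbd⟩
    choose y s hsn hyR hyd using hy
    have hKne : K.Nonempty := ⟨x, hx⟩
    -- infDist of y n to K tends to 0
    have hδ : Tendsto (fun n => @Metric.infDist X ms.toPseudoMetricSpace (y n) K)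
        atTop (𝓝 0) := by
      rw [Metric.tendsto_atTop]
      intro ε hε
      obtain ⟨t₀, ht₀⟩ := hattr ε hε
      refine ⟨⌈max t₀ 0⌉₊, fun n hn => ?_⟩
      have hn' : t₀ ≤ (n : ℝ) :=
        le_trans (le_trans (le_max_left _ _) (Nat.le_ceil _)) (Nat.cast_le.mpr hn)
      obtain ⟨p, hpK, hpd⟩ := ht₀ (s n) (le_trans hn' (hsn n)) (y n) (hyR n)
      have hle : @Metric.infDist X ms.toPseudoMetricSpace (y n) K ≤ ms.dist (y n) p :=
        @Metric.infDist_le_dist_of_mem X ms.toPseudoMetricSpace _ _ _ hpK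
      rw [Real.dist_eq, sub_zero,
        abs_of_nonneg (@Metric.infDist_nonneg X ms.toPseudoMetricSpace _ _)]
      exact lt_of_le_of_lt hle hpd
    -- choose p n ∈ K close to y n
    have hp : ∀ n : ℕ, ∃ p ∈ K, ms.dist (y n) p <
        @Metric.infDist X ms.toPseudoMetricSpace (y n) K + 1 / (n + 1) := by
      intro n
      exact (@Metric.infDist_lt_iff X ms.toPseudoMetricSpace _ _ _ hKne).mp
        (lt_add_of_pos_right _ (by positivity))
    choose p hpK hpd using hp
    have hdyp : Tendsto (fun n => ms.dist (y n) (p n)) atTop (𝓝 0) := by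
      have hsum : Tendsto (fun n : ℕ =>
          @Metric.infDist X ms.toPseudoMetricSpace (y n) K + 1 / (n + 1))
          atTop (𝓝 0) := by simpa using hδ.add aux_one_div
      exact squeeze_zero (fun n => (@dist_nonneg X ms.toPseudoMetricSpace _ _)) (fun n => (hpd n).le) hsum
    -- compactness: extract strongly convergent subsequence of p
    obtain ⟨q, hqK, φ, hφ, hpq⟩ := @aux_compact_subseq X ms K hcomp p hpK
    -- y (φ k) → q strongly
    have h1 : Tendsto (fun k => ms.dist (y (φ k)) q) atTop (𝓝 0) := by
      have hb : Tendsto (fun k => ms.dist (y (φ k)) (p (φ k)) + ms.dist (p (φ k)) q)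
          atTop (𝓝 0) := by
        simpa using (hdyp.comp hφ.tendsto_atTop).add hpq
      exact squeeze_zero (fun k => (@dist_nonneg X ms.toPseudoMetricSpace _ _))
        (fun k => @dist_triangle X ms.toPseudoMetricSpace (y (φ k)) (p (φ k)) q) hb
    -- hence weakly, so q = x
    have h2 : Tendsto (fun k => mw.dist (y (φ k)) q) atTop (𝓝 0) :=
      hsw (fun k => y (φ k)) (fun _ => q) h1
    have hw : Tendsto (fun n => mw.dist x (y n)) atTop (𝓝 0) :=
      squeeze_zero (fun n => (@dist_nonneg X mw.toPseudoMetricSpace _ _)) (fun n => (hyd n).le) aux_one_div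
    have hxq : x = q := by
      have hb : Tendsto (fun k => mw.dist x (y (φ k)) + mw.dist (y (φ k)) q)
          atTop (𝓝 0) := by simpa using (hw.comp hφ.tendsto_atTop).add h2
      have hle : mw.dist x q ≤ 0 :=
        le_of_tendsto_of_tendsto' tendsto_const_nhds hb
          (fun k => @dist_triangle X mw.toPseudoMetricSpace x (y (φ k)) q)
      exact mw.eq_of_dist_eq_zero (le_antisymm hle (@dist_nonneg X mw.toPseudoMetricSpace _ _))
    -- y (φ k) → x strongly
    have h3 : Tendsto (fun k => ms.dist x (y (φ k))) atTop (𝓝 0) := by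
      subst hxq
      simpa [@dist_comm X ms.toPseudoMetricSpace] using h1
    -- conclude
    rw [omegaLim, mem_iInter₂]
    intro T hT
    refine (@Metric.mem_closure_iff X ms.toPseudoMetricSpace _ x).mpr ?_
    intro ε hε
    obtain ⟨N, hN⟩ := aux_eventually_lt (fun k => (@dist_nonneg X ms.toPseudoMetricSpace _ _)) h3 hε
    have hk : (⌈T⌉₊ : ℝ) ≤ (φ (max N ⌈T⌉₊) : ℝ) := by
      have : max N ⌈T⌉₊ ≤ φ (max N ⌈T⌉₊) := hφ.le_apply
      exact_mod_cast le_trans (le_max_right N ⌈T⌉₊) this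
    refine ⟨y (φ (max N ⌈T⌉₊)), ?_, hN _ (le_max_left _ _)⟩
    rw [mem_iUnion₂]
    refine ⟨s (φ (max N ⌈T⌉₊)), ?_, hyR _⟩
    exact le_trans (le_trans (Nat.le_ceil T) hk) (hsn _)
end

section
/- The d_•-global attractor exists if and only if ω_•(X) is a d_•-attracting set. -/
open Set Filter Topology

/-!
Every closed attracting set contains `ω(X)`: a point of `ω(X)` is a limit of points `R t X`
with `t` arbitrarily large, and these are arbitrarily close to the set. Conversely, a global
attractor `A` lies in `ω(X)`: if `a ∈ A` were not in `ω(X)`, all of `R t X` would stay a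
distance `δ` away from `a` for large `t`, so removing the ball of radius `δ/2` around `a` from
`A` would leave a smaller closed attracting set. Hence a global attractor can only be `ω(X)`,
and `ω(X)`, being closed, is one as soon as it attracts.
-/

namespace EvolSys

section

variable {X : Type*} [m : MetricSpace X] (ES : EvolSys X)

lemma isClosed_omegaLim (A : Set X) : IsClosed (omegaLim m ES A) :=
  isClosed_biInter fun _ _ => isClosed_closure

lemma omegaLim_subset_of_isAttracting {B : Set X} (hBc : IsClosed B)
    (hBa : isAttracting m ES B) : omegaLim m ES univ ⊆ B := by
  intro x hx
  rw [← hBc.closure_eq, Metric.mem_closure_iff]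
  intro ε hε
  obtain ⟨t₀, ht₀⟩ := hBa (ε / 2) (half_pos hε)
  have hx' : x ∈ closure (⋃ t ∈ Ici (max t₀ 0), ES.R t univ) :=
    mem_iInter₂.mp hx _ (mem_Ici.mpr (le_max_right _ _))
  obtain ⟨y, hy, hxy⟩ := Metric.mem_closure_iff.mp hx' (ε / 2) (half_pos hε)
  obtain ⟨t, ht, hyt⟩ := mem_iUnion₂.mp hy
  obtain ⟨p, hpB, hyp⟩ := ht₀ t (le_trans (le_max_left _ _) ht) y hyt
  exact ⟨p, hpB, by linarith [dist_triangle x y p]⟩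

lemma exists_le_dist_of_notMem_omegaLim {a : X} (ha : a ∉ omegaLim m ES univ) :
    ∃ T δ : ℝ, 0 < δ ∧ ∀ t ≥ T, ∀ x ∈ ES.R t univ, δ ≤ dist x a := by
  obtain ⟨T, haT⟩ : ∃ T : ℝ, a ∉ closure (⋃ t ∈ Ici T, ES.R t univ) := by
    by_contra! h
    exact ha (mem_iInter₂.mpr fun T _ => h T)
  obtain ⟨δ, hδ, hball⟩ := Metric.isOpen_iff.mp isClosed_closure.isOpen_compl a haT
  refine ⟨T, δ, hδ, fun t ht x hx => not_lt.mp fun hxa => hball (Metric.mem_ball.mpr hxa) ?_⟩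
  exact subset_closure (mem_iUnion₂.mpr ⟨t, ht, hx⟩)

lemma isAttracting_diff_ball {P : Set X} (hP : isAttracting m ES P) {a : X} {T δ : ℝ}
    (hδ : 0 < δ) (hfar : ∀ t ≥ T, ∀ x ∈ ES.R t univ, δ ≤ dist x a) :
    isAttracting m ES (P \ Metric.ball a (δ / 2)) := by
  intro ε hε
  obtain ⟨t₀, ht₀⟩ := hP (min ε (δ / 4)) (lt_min hε (by linarith))
  refine ⟨max t₀ T, fun t ht x hx => ?_⟩
  obtain ⟨p, hpP, hxp⟩ := ht₀ t (le_trans (le_max_left _ _) ht) x hx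
  have hxa := hfar t (le_trans (le_max_right _ _) ht) x hx
  have hpa : δ / 2 ≤ dist p a := by
    linarith [dist_triangle x p a, min_le_right ε (δ / 4)]
  exact ⟨p, ⟨hpP, fun hp => (Metric.mem_ball.mp hp).not_ge hpa⟩,
    lt_of_lt_of_le hxp (min_le_left _ _)⟩

lemma subset_omegaLim_of_isGlobalAttractor {A : Set X} (hA : isGlobalAttractor m ES A) :
    A ⊆ omegaLim m ES univ := by
  obtain ⟨hAc, hAa, hmin⟩ := hA
  intro a ha
  by_contra haω
  obtain ⟨T, δ, hδ, hfar⟩ := ES.exists_le_dist_of_notMem_omegaLim haω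
  have hcut := hmin _ sdiff_subset ((hAc : IsClosed A).sdiff Metric.isOpen_ball)
    (ES.isAttracting_diff_ball hAa hδ hfar)
  exact (hcut.symm ▸ ha : a ∈ A \ Metric.ball a (δ / 2)).2 (Metric.mem_ball_self (half_pos hδ))

lemma isGlobalAttractor_iff_eq_omegaLim {A : Set X} :
    isGlobalAttractor m ES A ↔ A = omegaLim m ES univ ∧ isAttracting m ES A := by
  constructor
  · intro hA
    exact ⟨(ES.subset_omegaLim_of_isGlobalAttractor hA).antisymm
      (ES.omegaLim_subset_of_isAttracting hA.1 hA.2.1), hA.2.1⟩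
  · rintro ⟨rfl, hω⟩
    exact ⟨ES.isClosed_omegaLim univ, hω, fun B hB hBc hBa =>
      hB.antisymm (ES.omegaLim_subset_of_isAttracting hBc hBa)⟩

end

end EvolSys

theorem stmt6 {X : Type*} (m : MetricSpace X) (ES : EvolSys X) :
    (∃ A : Set X, isGlobalAttractor m ES A) ↔
      isAttracting m ES (omegaLim m ES Set.univ) := by
  simp only [ES.isGlobalAttractor_iff_eq_omegaLim, exists_eq_left]
end

section
/- Let A ⊆ X be such that there exists a trajectory u ∈ E([0,∞)) with u(0) ∈ A. Then ω_w(A) is a nonempty weakly compact set, and ω_w(A) uniformly weakly attracts A. -/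
open Set Filter Topology

theorem stmt7 {X : Type*} (mw : MetricSpace X) (ES : EvolSys X)
    (hXw : @IsCompact X (mtop mw) Set.univ)
    (A : Set X) (hA : ∃ u ∈ ES.E 0, u 0 ∈ A) :
    (omegaLim mw ES A).Nonempty ∧
    @IsCompact X (mtop mw) (omegaLim mw ES A) ∧
    attracts mw ES (omegaLim mw ES A) A := by
  letI : MetricSpace X := mw
  obtain ⟨u, hu, hu0⟩ := hA
  have hmem : ∀ T : ℝ, u T ∈ ES.R T A := fun T => ⟨u, hu, hu0, rfl⟩
  set F : ℝ → Set X := fun T => closure (⋃ t ∈ Ici T, ES.R t A) with hF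
  have hFne : ∀ T, (F T).Nonempty := fun T =>
    ⟨u T, subset_closure (mem_biUnion self_mem_Ici (hmem T))⟩
  have hFclosed : ∀ T, IsClosed (F T) := fun T => isClosed_closure
  have hFmono : ∀ T₁ T₂ : ℝ, T₁ ≤ T₂ → F T₂ ⊆ F T₁ := by
    intro T₁ T₂ h
    exact closure_mono (biUnion_subset_biUnion_left (Ici_subset_Ici.mpr h))
  have hFcomp : ∀ T, IsCompact (F T) :=
    fun T => hXw.of_isClosed_subset (hFclosed T) (subset_univ _)
  have homega : omegaLim mw ES A = ⋂ T ∈ Ici (0:ℝ), F T := rfl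
  have hsub : (⋂ T, F T) ⊆ omegaLim mw ES A := by
    rw [homega]; exact fun x hx => mem_iInter₂.2 fun T _ => mem_iInter.1 hx T
  have hdir : Directed (· ⊇ ·) F := fun T₁ T₂ =>
    ⟨max T₁ T₂, hFmono _ _ (le_max_left _ _), hFmono _ _ (le_max_right _ _)⟩
  have hne : (omegaLim mw ES A).Nonempty := by
    obtain ⟨x, hx⟩ :=
      IsCompact.nonempty_iInter_of_directed_nonempty_isCompact_isClosed F hdir hFne hFcomp
        hFclosed
    exact ⟨x, hsub hx⟩
  have homclosed : IsClosed (omegaLim mw ES A) := by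
    rw [homega]
    exact isClosed_biInter fun T _ => hFclosed T
  refine ⟨hne, hXw.of_isClosed_subset homclosed (subset_univ _), ?_⟩
  by_contra hcon
  unfold attracts at hcon
  push_neg at hcon
  obtain ⟨ε, hε, hcon⟩ := hcon
  set S : Set X := {x | ∀ p ∈ omegaLim mw ES A, ε ≤ dist x p} with hS
  have hSclosed : IsClosed S := by
    have : S = ⋂ p ∈ omegaLim mw ES A, {x | ε ≤ dist x p} := by
      ext x; simp [hS]
    rw [this]
    exact isClosed_biInter fun p _ =>
      isClosed_le continuous_const (continuous_id.dist continuous_const)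
  set G : ℝ → Set X := fun T => F T ∩ S with hG
  have hGne : ∀ T, (G T).Nonempty := by
    intro T
    obtain ⟨t, ht, x, hxR, hxS⟩ := hcon T
    exact ⟨x, subset_closure (mem_biUnion ht hxR), hxS⟩
  have hGclosed : ∀ T, IsClosed (G T) := fun T => (hFclosed T).inter hSclosed
  have hGcomp : ∀ T, IsCompact (G T) :=
    fun T => hXw.of_isClosed_subset (hGclosed T) (subset_univ _)
  have hGdir : Directed (· ⊇ ·) G := fun T₁ T₂ =>
    ⟨max T₁ T₂, inter_subset_inter_left _ (hFmono _ _ (le_max_left _ _)),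
      inter_subset_inter_left _ (hFmono _ _ (le_max_right _ _))⟩
  obtain ⟨y, hy⟩ :=
    IsCompact.nonempty_iInter_of_directed_nonempty_isCompact_isClosed G hGdir hGne hGcomp
      hGclosed
  have hyF : ∀ T, y ∈ F T := fun T => (mem_iInter.1 hy T).1
  have hyS : y ∈ S := (mem_iInter.1 hy 0).2
  have hyom : y ∈ omegaLim mw ES A := hsub (mem_iInter.2 hyF)
  have := hyS y hyom
  simp at this
  linarith
end

section
/- Every evolutionary system possesses a weak global attractor A_w, and A_w = ω_w(X). -/
open Set Filter Topology

/-! `ω(X)` is closed, being an intersection of closures. A closed set `B` attracting `X` contains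
`ω(X)`: for every `ε > 0` the orbit tails eventually lie in the `ε`-thickening of `B`, so `ω(X)`
lies in every closed `ε`-thickening of `B`, whose intersection is `B`. Conversely, when `X` is
`d_w`-compact the tail closures `closure (⋃ t ≥ T, R t X)` are compact and decrease to `ω(X)`, so
the open `ε`-thickening of `ω(X)` contains one of them, i.e. `ω(X)` attracts `X`. -/

section Attractor

variable {X : Type*} [m : MetricSpace X] (ES : EvolSys X)

theorem isClosed_omegaLim (A : Set X) : IsClosed (omegaLim m ES A) :=
  isClosed_biInter fun _ _ => isClosed_closure

theorem attracts_iff_forall_subset_thickening {P A : Set X} :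
    attracts m ES P A ↔
      ∀ ε > (0:ℝ), ∃ t₀ : ℝ, ∀ t ≥ t₀, ES.R t A ⊆ Metric.thickening ε P := by
  simp only [attracts, subset_def, Metric.mem_thickening_iff]

theorem omegaLim_subset_of_attracts {A B : Set X} (hB : IsClosed B)
    (hBA : attracts m ES B A) : omegaLim m ES A ⊆ B := by
  rw [← hB.closure_eq, Metric.closure_eq_iInter_cthickening]
  refine subset_iInter₂ fun ε hε => ?_
  obtain ⟨t₀, ht₀⟩ := (attracts_iff_forall_subset_thickening ES).1 hBA ε hε
  calc omegaLim m ES A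
      ⊆ closure (⋃ t ∈ Ici (max t₀ 0), ES.R t A) :=
        biInter_subset_of_mem (mem_Ici.2 (le_max_right _ _))
    _ ⊆ closure (Metric.thickening ε B) :=
        closure_mono (iUnion₂_subset fun t ht => ht₀ t (le_of_max_le_left ht))
    _ ⊆ Metric.cthickening ε B := Metric.closure_thickening_subset_cthickening ε B

theorem attracts_omegaLim [CompactSpace X] (A : Set X) :
    attracts m ES (omegaLim m ES A) A := by
  rw [attracts_iff_forall_subset_thickening]
  intro ε hε
  set V : Ici (0:ℝ) → Set X := fun T => closure (⋃ t ∈ Ici (T : ℝ), ES.R t A)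
  have hV : Antitone V := fun T T' hTT' =>
    closure_mono (biUnion_subset_biUnion_left (Ici_subset_Ici.2 hTT'))
  have hω : omegaLim m ES A = ⋂ T, V T := biInter_eq_iInter _ _
  obtain ⟨T, hT⟩ := exists_subset_nhds_of_isCompact' hV.directed_ge
    (fun _ => isClosed_closure.isCompact) (fun _ => isClosed_closure)
    (U := Metric.thickening ε (omegaLim m ES A)) fun x hx =>
      Metric.isOpen_thickening.mem_nhds (Metric.self_subset_thickening hε _ (hω ▸ hx))
  exact ⟨T, fun t ht => (subset_biUnion_of_mem (u := fun t => ES.R t A) ht).trans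
    (subset_closure.trans hT)⟩

end Attractor

theorem stmt8 {X : Type*} (mw : MetricSpace X) (ES : EvolSys X)
    (hXw : @IsCompact X (mtop mw) Set.univ) :
    isGlobalAttractor mw ES (omegaLim mw ES Set.univ) := by
  have : CompactSpace X := ⟨hXw⟩
  exact ⟨isClosed_omegaLim ES univ, attracts_omegaLim ES univ, fun B hB hBcl hBattr =>
    hB.antisymm (omegaLim_subset_of_attracts ES hBcl hBattr)⟩
end

section
/- If the strong global attractor A_s of an evolutionary system exists, then its weak closure equals the weak global attractor: closure_w(A_s) = A_w. -/
open Set Filter Topology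

theorem stmt9 {X : Type*} (ms mw : MetricSpace X) (ES : EvolSys X)
    (hXw : @IsCompact X (mtop mw) Set.univ)
    (hsw : ∀ u v : ℕ → X,
      Tendsto (fun n => ms.dist (u n) (v n)) atTop (𝓝 0) →
      Tendsto (fun n => mw.dist (u n) (v n)) atTop (𝓝 0))
    (As Aw : Set X)
    (hAs : isGlobalAttractor ms ES As)
    (hAw : isGlobalAttractor mw ES Aw) :
    @closure X (mtop mw) As = Aw := by
  obtain ⟨hAsC, hAsA, hAsMin⟩ := hAs
  obtain ⟨hAwC, hAwA, hAwMin⟩ := hAw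
  letI : MetricSpace X := mw
  -- Step 1: uniform strong-to-weak estimate
  have unif : ∀ ε > (0:ℝ), ∃ δ > (0:ℝ), ∀ x y : X, ms.dist x y < δ → mw.dist x y < ε := by
    intro ε hε
    by_contra h
    push_neg at h
    have h' : ∀ n : ℕ, ∃ x y : X, ms.dist x y < 1/(n+1) ∧ ε ≤ mw.dist x y := by
      intro n
      obtain ⟨x, y, h1, h2⟩ := h (1/(n+1)) (by positivity)
      exact ⟨x, y, h1, h2⟩
    choose x y h1 h2 using h'
    have hds : Tendsto (fun n => ms.dist (x n) (y n)) atTop (𝓝 0) := by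
      apply squeeze_zero (fun n => @dist_nonneg X ms.toPseudoMetricSpace _ _)
        (fun n => (h1 n).le)
      exact tendsto_one_div_add_atTop_nhds_zero_nat
    have hdw := hsw x y hds
    obtain ⟨n, hn⟩ := (hdw.eventually_lt_const hε).exists
    exact absurd (h2 n) (not_le.mpr hn)
  -- Step 2: recurrence of points of As
  have key : ∀ p ∈ As, ∀ T : ℝ, ∀ ε > (0:ℝ), ∃ t ≥ T, ∃ x ∈ ES.R t univ,
      ms.dist x p < ε := by
    intro p hp T ε hε
    by_contra h
    push_neg at h
    -- h : ∀ t ≥ T, ∀ x ∈ ES.R t univ, ε ≤ ms.dist x p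
    set B : Set X := As ∩ {q | ε/2 ≤ ms.dist q p} with hB
    have hBc : @IsClosed X (mtop ms) B := by
      apply @IsClosed.inter X _ _ (mtop ms) hAsC
      letI := ms
      exact isClosed_le continuous_const (continuous_id.dist continuous_const)
    have hBa : isAttracting ms ES B := by
      intro δ hδ
      obtain ⟨t₁, ht₁⟩ := hAsA (min δ (ε/2)) (by positivity)
      refine ⟨max t₁ T, fun t ht x hx => ?_⟩
      obtain ⟨q, hqA, hq⟩ := ht₁ t (le_trans (le_max_left _ _) ht) x hx
      refine ⟨q, ⟨hqA, ?_⟩, lt_of_lt_of_le hq (min_le_left _ _)⟩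
      have hxp : ε ≤ ms.dist x p := h t (le_trans (le_max_right _ _) ht) x hx
      have htri : ms.dist x p ≤ ms.dist x q + ms.dist q p := ms.dist_triangle x q p
      have hq2 : ms.dist x q < ε/2 := lt_of_lt_of_le hq (min_le_right _ _)
      simp only [mem_setOf_eq]
      linarith
    have hBeq : B = As := hAsMin B inter_subset_left hBc hBa
    have hpB : p ∈ B := hBeq ▸ hp
    have : ε/2 ≤ ms.dist p p := hpB.2
    rw [ms.dist_self] at this
    linarith
  -- Step 3: As ⊆ Aw
  have hsub : As ⊆ Aw := by
    intro p hp
    have hAwA' : ∀ n : ℕ, ∃ t₀ : ℝ, ∀ t ≥ t₀, ∀ x ∈ ES.R t univ,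
        ∃ q ∈ Aw, mw.dist x q < 1/(n+1) := fun n => hAwA (1/(n+1)) (by positivity)
    choose t₀ ht₀ using hAwA'
    have hkey : ∀ n : ℕ, ∃ t ≥ t₀ n, ∃ x ∈ ES.R t univ, ms.dist x p < 1/(n+1) :=
      fun n => key p hp (t₀ n) (1/(n+1)) (by positivity)
    choose t ht x hx hdx using hkey
    choose q hqA hq using fun n => ht₀ n (t n) (ht n) (x n) (hx n)
    have hds : Tendsto (fun n => ms.dist (x n) ((fun _ => p) n)) atTop (𝓝 0) := by
      apply squeeze_zero (fun n => @dist_nonneg X ms.toPseudoMetricSpace _ _)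
        (fun n => (hdx n).le)
      exact tendsto_one_div_add_atTop_nhds_zero_nat
    have hdw := hsw x (fun _ => p) hds
    have hq0 : Tendsto (fun n => mw.dist (q n) p) atTop (𝓝 0) := by
      have hb : ∀ n, mw.dist (q n) p ≤ mw.dist (x n) (q n) + mw.dist (x n) p := by
        intro n
        calc mw.dist (q n) p ≤ mw.dist (q n) (x n) + mw.dist (x n) p := mw.dist_triangle _ _ _
        _ = mw.dist (x n) (q n) + mw.dist (x n) p := by rw [mw.dist_comm]
      have hsum : Tendsto (fun n => mw.dist (x n) (q n) + mw.dist (x n) p) atTop (𝓝 0) := by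
        have h1 : Tendsto (fun n : ℕ => mw.dist (x n) (q n)) atTop (𝓝 0) := by
          apply squeeze_zero (fun n => @dist_nonneg X mw.toPseudoMetricSpace _ _)
            (fun n => (hq n).le)
          exact tendsto_one_div_add_atTop_nhds_zero_nat
        simpa using h1.add hdw
      exact squeeze_zero (fun n => @dist_nonneg X mw.toPseudoMetricSpace _ _) hb hsum
    have hmem : p ∈ closure Aw := by
      rw [Metric.mem_closure_iff]
      intro δ hδ
      obtain ⟨n, hn⟩ := (hq0.eventually_lt_const hδ).exists
      exact ⟨q n, hqA n, by rw [dist_comm]; exact hn⟩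
    have hclosed : IsClosed Aw := hAwC
    rwa [hclosed.closure_eq] at hmem
  -- Step 4: closure_w As is weakly closed, weakly attracting, contained in Aw
  have hAttw : isAttracting mw ES (@closure X (mtop mw) As) := by
    intro ε hε
    obtain ⟨δ, hδ, hδε⟩ := unif ε hε
    obtain ⟨t₀, h⟩ := hAsA δ hδ
    refine ⟨t₀, fun t ht z hz => ?_⟩
    obtain ⟨p, hpA, hd⟩ := h t ht z hz
    exact ⟨p, subset_closure hpA, hδε _ _ hd⟩
  have hclsub : @closure X (mtop mw) As ⊆ Aw := closure_minimal hsub hAwC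
  exact hAwMin _ hclsub isClosed_closure hAttw
end

section
/- Let E be an asymptotically compact evolutionary system and A ⊆ X a set for which some trajectory u ∈ E([0,∞)) has u(0) ∈ A. Then ω_s(A) is a nonempty strongly compact set that uniformly strongly attracts A, and ω_s(A) = ω_w(A). -/
open Set Filter Topology

/-!
Everything rests on two facts. A sequence of points of `ω(A)` is shadowed, up to vanishing
distance, by points `u_n(t_n)` of trajectories starting in `A` with `t_n → ∞`; and asymptotic
compactness extracts from any sequence of such points a strongly convergent subsequence, whose
limit then lies in `ω_s(A)`. Nonemptiness, compactness and attraction follow directly; for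
`ω_s(A) = ω_w(A)` a weak limit is identified with the strong limit of a subsequence.
-/

section OmegaLimit

variable {X : Type*}

lemma mem_omegaLim_of_tendsto (m : MetricSpace X) (ES : EvolSys X) {A : Set X}
    {t : ℕ → ℝ} (ht : Tendsto t atTop atTop) {y : ℕ → X} (hy : ∀ n, y n ∈ ES.R (t n) A)
    {z : X} (hz : Tendsto (fun n => m.dist (y n) z) atTop (𝓝 0)) :
    z ∈ omegaLim m ES A := by
  let _ := m
  refine mem_iInter₂.2 fun T _ => Metric.mem_closure_iff.2 fun ε hε => ?_
  obtain ⟨n, hTn, hn⟩ := ((ht.eventually_ge_atTop T).and (hz (Iio_mem_nhds hε))).exists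
  exact ⟨y n, mem_iUnion₂.2 ⟨t n, hTn, hy n⟩, by rw [dist_comm]; exact hn⟩

lemma exists_seq_tendsto_of_forall_mem_omegaLim (m : MetricSpace X) (ES : EvolSys X)
    {A : Set X} {x : ℕ → X} (hx : ∀ n, x n ∈ omegaLim m ES A) :
    ∃ (t : ℕ → ℝ) (y : ℕ → X), Tendsto t atTop atTop ∧ (∀ n, y n ∈ ES.R (t n) A) ∧
      Tendsto (fun n => m.dist (y n) (x n)) atTop (𝓝 0) := by
  let _ := m
  have hclose : ∀ n : ℕ, ∃ t ≥ (n : ℝ), ∃ y ∈ ES.R t A, dist y (x n) < 1 / ((n : ℝ) + 1) := by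
    intro n
    have hxn := mem_iInter₂.1 (hx n) n (mem_Ici.2 n.cast_nonneg)
    obtain ⟨y, hy, hxy⟩ := Metric.mem_closure_iff.1 hxn _ Nat.one_div_pos_of_nat
    obtain ⟨t, ht, hyt⟩ := mem_iUnion₂.1 hy
    exact ⟨t, ht, y, hyt, by rwa [dist_comm]⟩
  choose t ht y hy hxy using hclose
  refine ⟨t, y, tendsto_atTop_mono ht tendsto_natCast_atTop_atTop, hy, ?_⟩
  exact squeeze_zero (fun _ => dist_nonneg) (fun n => (hxy n).le)
    tendsto_one_div_add_atTop_nhds_zero_nat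

lemma exists_mem_omegaLim_subseq_tendsto {ms : MetricSpace X} {ES : EvolSys X}
    (hac : asympCompact ms ES) {A : Set X} {t : ℕ → ℝ} (ht : Tendsto t atTop atTop)
    {x : ℕ → X} (hx : ∀ n, x n ∈ ES.R (t n) A) :
    ∃ z ∈ omegaLim ms ES A, ∃ φ : ℕ → ℕ, StrictMono φ ∧
      Tendsto (fun n => ms.dist (x (φ n)) z) atTop (𝓝 0) := by
  have hxR : ∀ n, x n ∈ ES.R (t n) univ := fun n => by
    obtain ⟨u, hu, -, hut⟩ := hx n
    exact ⟨u, hu, mem_univ _, hut⟩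
  obtain ⟨φ, z, hφ, hz⟩ := hac t x ht hxR
  exact ⟨z, mem_omegaLim_of_tendsto ms ES (ht.comp hφ.tendsto_atTop) (fun n => hx (φ n)) hz,
    φ, hφ, hz⟩

section AsympCompact

variable {ms : MetricSpace X} {ES : EvolSys X} (hac : asympCompact ms ES) (A : Set X)
include hac

lemma omegaLim_nonempty_of_asympCompact (hA : ∃ u ∈ ES.E 0, u 0 ∈ A) :
    (omegaLim ms ES A).Nonempty := by
  obtain ⟨u, hu, hu0⟩ := hA
  obtain ⟨z, hz, -⟩ := exists_mem_omegaLim_subseq_tendsto hac tendsto_natCast_atTop_atTop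
    (x := fun n : ℕ => u n) fun n => ⟨u, hu, hu0, rfl⟩
  exact ⟨z, hz⟩

lemma isCompact_omegaLim_of_asympCompact : @IsCompact X (mtop ms) (omegaLim ms ES A) := by
  let _ := ms
  change IsCompact (omegaLim ms ES A)
  refine IsSeqCompact.isCompact fun x hx => ?_
  obtain ⟨t, y, ht, hy, hyx⟩ := exists_seq_tendsto_of_forall_mem_omegaLim ms ES hx
  obtain ⟨z, hz, φ, hφ, hyz⟩ := exists_mem_omegaLim_subseq_tendsto hac ht hy
  refine ⟨z, hz, φ, hφ, tendsto_iff_dist_tendsto_zero.2 ?_⟩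
  refine squeeze_zero (fun _ => dist_nonneg) (fun n => dist_triangle_left _ _ (y (φ n))) ?_
  simpa using (hyx.comp hφ.tendsto_atTop).add hyz

lemma attracts_omegaLim_of_asympCompact : attracts ms ES (omegaLim ms ES A) A := by
  by_contra hcon
  simp only [attracts, not_forall, not_exists, not_and, not_lt] at hcon
  obtain ⟨ε, hε, hfar⟩ := hcon
  choose t ht x hx hxω using fun n : ℕ => hfar n
  obtain ⟨z, hz, φ, -, hxz⟩ := exists_mem_omegaLim_subseq_tendsto hac
    (tendsto_atTop_mono ht tendsto_natCast_atTop_atTop) hx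
  have : ε ≤ 0 := ge_of_tendsto hxz (Eventually.of_forall fun n => hxω (φ n) z hz)
  linarith

lemma omegaLim_eq_of_asympCompact {mw : MetricSpace X}
    (hsw : ∀ u v : ℕ → X, Tendsto (fun n => ms.dist (u n) (v n)) atTop (𝓝 0) →
      Tendsto (fun n => mw.dist (u n) (v n)) atTop (𝓝 0)) :
    omegaLim ms ES A = omegaLim mw ES A := by
  refine Subset.antisymm (fun z hz => ?_) (fun z hz => ?_)
  · obtain ⟨t, y, ht, hy, hyz⟩ :=
      exists_seq_tendsto_of_forall_mem_omegaLim ms ES (x := fun _ => z) fun _ => hz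
    exact mem_omegaLim_of_tendsto mw ES ht hy (hsw y _ hyz)
  · obtain ⟨t, y, ht, hy, hyz⟩ :=
      exists_seq_tendsto_of_forall_mem_omegaLim mw ES (x := fun _ => z) fun _ => hz
    obtain ⟨z', hz', φ, hφ, hyz'⟩ := exists_mem_omegaLim_subseq_tendsto hac ht hy
    let _ := mw
    have hweak : Tendsto (y ∘ φ) atTop (𝓝 z') :=
      tendsto_iff_dist_tendsto_zero.2 (hsw (y ∘ φ) _ hyz')
    have hweak' : Tendsto (y ∘ φ) atTop (𝓝 z) :=
      (tendsto_iff_dist_tendsto_zero.2 hyz).comp hφ.tendsto_atTop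
    rwa [tendsto_nhds_unique hweak' hweak]

end AsympCompact

end OmegaLimit

theorem stmt10_general {X : Type*} (ms mw : MetricSpace X) (ES : EvolSys X)
    (hsw : ∀ u v : ℕ → X,
      Tendsto (fun n => ms.dist (u n) (v n)) atTop (𝓝 0) →
      Tendsto (fun n => mw.dist (u n) (v n)) atTop (𝓝 0))
    (hac : asympCompact ms ES)
    (A : Set X) (hA : ∃ u ∈ ES.E 0, u 0 ∈ A) :
    (omegaLim ms ES A).Nonempty ∧
    @IsCompact X (mtop ms) (omegaLim ms ES A) ∧
    attracts ms ES (omegaLim ms ES A) A ∧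
    omegaLim ms ES A = omegaLim mw ES A :=
  ⟨omegaLim_nonempty_of_asympCompact hac A hA, isCompact_omegaLim_of_asympCompact hac A,
    attracts_omegaLim_of_asympCompact hac A, omegaLim_eq_of_asympCompact hac A hsw⟩

theorem stmt10 {X : Type*} (ms mw : MetricSpace X) (ES : EvolSys X)
    (hXw : @IsCompact X (mtop mw) Set.univ)
    (hsw : ∀ u v : ℕ → X,
      Tendsto (fun n => ms.dist (u n) (v n)) atTop (𝓝 0) →
      Tendsto (fun n => mw.dist (u n) (v n)) atTop (𝓝 0))
    (hac : asympCompact ms ES)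
    (A : Set X) (hA : ∃ u ∈ ES.E 0, u 0 ∈ A) :
    (omegaLim ms ES A).Nonempty ∧
    @IsCompact X (mtop ms) (omegaLim ms ES A) ∧
    attracts ms ES (omegaLim ms ES A) A ∧
    omegaLim ms ES A = omegaLim mw ES A :=
  stmt10_general ms mw ES hsw hac A hA
end

section
/- If an evolutionary system E is asymptotically compact, then the weak global attractor A_w is a strongly compact strong global attractor (i.e., A_s exists, is d_s-compact, and A_s = A_w). -/
open Set Filter Topology

section Aux

variable {Y : Type*} [MetricSpace Y]

theorem aux_mem_closure_of_seq {S : Set Y} {a : Y} (x : ℕ → Y)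
    (hx : ∀ n, x n ∈ S) (hd : Tendsto (fun n => dist (x n) a) atTop (𝓝 0)) :
    a ∈ closure S := by
  rw [Metric.mem_closure_iff]
  intro ε hε
  obtain ⟨n, hn⟩ := (hd.eventually_lt_const hε).exists
  exact ⟨x n, hx n, by rwa [dist_comm]⟩

theorem aux_exists_near {S : Set Y} {a : Y} (h : a ∈ closure S) {ε : ℝ} (hε : 0 < ε) :
    ∃ b ∈ S, dist b a < ε := by
  obtain ⟨b, hb, hd⟩ := Metric.mem_closure_iff.mp h ε hε
  exact ⟨b, hb, by rwa [dist_comm]⟩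

theorem aux_mem_of_closed {B : Set Y} {a : Y} (hB : IsClosed B)
    (h : ∀ ε > (0:ℝ), ∃ b ∈ B, dist b a < ε) : a ∈ B := by
  rw [← hB.closure_eq, Metric.mem_closure_iff]
  intro ε hε
  obtain ⟨b, hb, hd⟩ := h ε hε
  exact ⟨b, hb, by rwa [dist_comm]⟩

theorem aux_compact {s : Set Y}
    (h : ∀ a : ℕ → Y, (∀ n, a n ∈ s) → ∃ y ∈ s, ∃ φ : ℕ → ℕ, StrictMono φ ∧
      Tendsto (fun n => dist (a (φ n)) y) atTop (𝓝 0)) : IsCompact s := by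
  apply IsSeqCompact.isCompact
  intro x hx
  obtain ⟨y, hy, φ, hφ, hd⟩ := h x hx
  exact ⟨y, hy, φ, hφ, tendsto_iff_dist_tendsto_zero.mpr hd⟩

theorem aux_isClosed {s : Set Y} (h : IsCompact s) : IsClosed s := h.isClosed

theorem aux_eq_of_tendsto {a b : Y} (x : ℕ → Y)
    (hd1 : Tendsto (fun n => dist (x n) a) atTop (𝓝 0))
    (hd2 : Tendsto (fun n => dist (x n) b) atTop (𝓝 0)) : a = b :=
  tendsto_nhds_unique (tendsto_iff_dist_tendsto_zero.mpr hd1)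
    (tendsto_iff_dist_tendsto_zero.mpr hd2)

theorem aux_tendsto_trans {a : Y} (x y : ℕ → Y)
    (hd1 : Tendsto (fun n => dist (x n) (y n)) atTop (𝓝 0))
    (hd2 : Tendsto (fun n => dist (y n) a) atTop (𝓝 0)) :
    Tendsto (fun n => dist (x n) a) atTop (𝓝 0) := by
  apply squeeze_zero (fun n => dist_nonneg) (fun n => dist_triangle _ _ _)
  simpa using hd1.add hd2

end Aux

theorem stmt11 {X : Type*} (ms mw : MetricSpace X) (ES : EvolSys X)
    (hXw : @IsCompact X (mtop mw) Set.univ)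
    (hsw : ∀ u v : ℕ → X,
      Tendsto (fun n => ms.dist (u n) (v n)) atTop (𝓝 0) →
      Tendsto (fun n => mw.dist (u n) (v n)) atTop (𝓝 0))
    (hac : asympCompact ms ES) :
    @IsCompact X (mtop ms) (omegaLim mw ES Set.univ) ∧
    isGlobalAttractor ms ES (omegaLim mw ES Set.univ) := by
  classical
  set A := omegaLim mw ES Set.univ with hA
  -- strong ω-limit points belong to A
  have hωA : ∀ (y : X) (t : ℕ → ℝ) (x : ℕ → X), Tendsto t atTop atTop →
      (∀ n, x n ∈ ES.R (t n) Set.univ) →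
      Tendsto (fun n => ms.dist (x n) y) atTop (𝓝 0) → y ∈ A := by
    intro y t x ht hx hd
    rw [hA, omegaLim]
    refine mem_iInter₂.mpr fun T hT => ?_
    obtain ⟨N, hN⟩ := eventually_atTop.mp (ht.eventually_ge_atTop T)
    refine @aux_mem_closure_of_seq X mw _ _ (fun n => x (n + N)) (fun n => ?_) ?_
    · exact mem_iUnion₂.mpr ⟨t (n + N), hN _ (Nat.le_add_left N n), hx _⟩
    · exact hsw (fun n => x (n + N)) (fun _ => y) (hd.comp (tendsto_add_atTop_nat N))
  -- every point of A is a strong ω-limit point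
  have hAω : ∀ a ∈ A, ∃ (t : ℕ → ℝ) (x : ℕ → X), (∀ n : ℕ, (n : ℝ) ≤ t n) ∧
      (∀ n, x n ∈ ES.R (t n) Set.univ) ∧
      Tendsto (fun n => ms.dist (x n) a) atTop (𝓝 0) := by
    intro a ha
    rw [hA, omegaLim] at ha
    have ha' := mem_iInter₂.mp ha
    have key : ∀ n : ℕ, ∃ s : ℝ, (n : ℝ) ≤ s ∧ ∃ b ∈ ES.R s Set.univ,
        mw.dist b a < 1 / (n + 1) := by
      intro n
      have h1 := ha' (n : ℝ) (mem_Ici.mpr (Nat.cast_nonneg n))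
      obtain ⟨b, hb, hdb⟩ := @aux_exists_near X mw _ _ h1 (1 / (n + 1)) (by positivity)
      obtain ⟨s, hs, hbs⟩ := mem_iUnion₂.mp hb
      exact ⟨s, hs, b, hbs, hdb⟩
    choose t0 ht0 x0 hx0 hd0 using key
    have htt : Tendsto t0 atTop atTop :=
      tendsto_atTop_mono ht0 tendsto_natCast_atTop_atTop
    obtain ⟨φ, y, hφ, hdy⟩ := hac t0 x0 htt hx0
    have hwxy : Tendsto (fun n => mw.dist (x0 (φ n)) y) atTop (𝓝 0) :=
      hsw (fun n => x0 (φ n)) (fun _ => y) hdy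
    have hwxa : Tendsto (fun n => mw.dist (x0 (φ n)) a) atTop (𝓝 0) := by
      refine squeeze_zero (fun n => @dist_nonneg X mw.toPseudoMetricSpace _ _)
        (fun n => ?_) tendsto_one_div_add_atTop_nhds_zero_nat
      refine le_trans (hd0 (φ n)).le (one_div_le_one_div_of_le (by positivity) ?_)
      have : (n : ℝ) ≤ (φ n : ℝ) := Nat.cast_le.mpr hφ.le_apply
      linarith
    have hay : a = y := @aux_eq_of_tendsto X mw _ _ (fun n => x0 (φ n)) hwxa hwxy
    refine ⟨t0 ∘ φ, x0 ∘ φ, fun n => le_trans (Nat.cast_le.mpr hφ.le_apply) (ht0 (φ n)),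
      fun n => hx0 (φ n), ?_⟩
    rw [hay]
    exact hdy
  -- A is attracting
  have hAtt : isAttracting ms ES A := by
    intro ε hε
    by_contra h
    push_neg at h
    choose t ht x hx hp using fun n : ℕ => h (n : ℝ)
    have htt : Tendsto t atTop atTop :=
      tendsto_atTop_mono ht tendsto_natCast_atTop_atTop
    obtain ⟨φ, y, hφ, hdy⟩ := hac t x htt hx
    have hyA : y ∈ A := hωA y (t ∘ φ) (x ∘ φ) (htt.comp hφ.tendsto_atTop)
      (fun n => hx (φ n)) hdy
    have : ε ≤ 0 := ge_of_tendsto hdy (Eventually.of_forall fun n => hp (φ n) y hyA)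
    linarith
  -- A is strongly sequentially compact
  have hSeq : ∀ a : ℕ → X, (∀ n, a n ∈ A) → ∃ y ∈ A, ∃ φ : ℕ → ℕ, StrictMono φ ∧
      Tendsto (fun n => ms.dist (a (φ n)) y) atTop (𝓝 0) := by
    intro a haA
    have key : ∀ n : ℕ, ∃ s : ℝ, (n : ℝ) ≤ s ∧ ∃ b ∈ ES.R s Set.univ,
        ms.dist b (a n) < 1 / (n + 1) := by
      intro n
      obtain ⟨t, x, ht, hx, hd⟩ := hAω (a n) (haA n)
      have h1 : ∀ᶠ k in atTop, ms.dist (x k) (a n) < 1 / (n + 1) :=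
        hd.eventually_lt_const (by positivity)
      obtain ⟨K, hK⟩ := eventually_atTop.mp h1
      refine ⟨t (max n K), le_trans ?_ (ht _), x (max n K), hx _, hK _ (le_max_right n K)⟩
      exact_mod_cast le_max_left n K
    choose t0 ht0 x0 hx0 hd0 using key
    have htt : Tendsto t0 atTop atTop :=
      tendsto_atTop_mono ht0 tendsto_natCast_atTop_atTop
    obtain ⟨φ, y, hφ, hdy⟩ := hac t0 x0 htt hx0
    have hyA : y ∈ A := hωA y (t0 ∘ φ) (x0 ∘ φ) (htt.comp hφ.tendsto_atTop)
      (fun n => hx0 (φ n)) hdy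
    refine ⟨y, hyA, φ, hφ, ?_⟩
    have h2 : Tendsto (fun n => ms.dist (a (φ n)) (x0 (φ n))) atTop (𝓝 0) := by
      refine squeeze_zero (fun n => @dist_nonneg X ms.toPseudoMetricSpace _ _)
        (fun n => ?_) tendsto_one_div_add_atTop_nhds_zero_nat
      rw [@dist_comm X ms.toPseudoMetricSpace]
      refine le_trans (hd0 (φ n)).le (one_div_le_one_div_of_le (by positivity) ?_)
      have : (n : ℝ) ≤ (φ n : ℝ) := Nat.cast_le.mpr hφ.le_apply
      linarith
    exact @aux_tendsto_trans X ms y (fun n => a (φ n)) (fun n => x0 (φ n)) h2 hdy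
  have hCompact : @IsCompact X (mtop ms) A := @aux_compact X ms A hSeq
  refine ⟨hCompact, @aux_isClosed X ms A hCompact, hAtt, ?_⟩
  -- minimality
  intro B hBA hBc hBatt
  refine Subset.antisymm hBA fun a ha => ?_
  obtain ⟨t, x, ht, hx, hd⟩ := hAω a ha
  refine @aux_mem_of_closed X ms B a hBc fun ε hε => ?_
  obtain ⟨t₀, hattr⟩ := hBatt (ε / 2) (by linarith)
  have h1 : ∀ᶠ n in atTop, t₀ ≤ t n :=
    (tendsto_atTop_mono ht tendsto_natCast_atTop_atTop).eventually_ge_atTop t₀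
  have h2 : ∀ᶠ n in atTop, ms.dist (x n) a < ε / 2 := hd.eventually_lt_const (by linarith)
  obtain ⟨n, hn1, hn2⟩ := (h1.and h2).exists
  obtain ⟨p, hpB, hpd⟩ := hattr (t n) hn1 (x n) (hx n)
  refine ⟨p, hpB, ?_⟩
  calc ms.dist p a ≤ ms.dist p (x n) + ms.dist (x n) a :=
        @dist_triangle X ms.toPseudoMetricSpace _ _ _
    _ < ε / 2 + ε / 2 := by
        rw [@dist_comm X ms.toPseudoMetricSpace p (x n)]
        exact add_lt_add hpd hn2
    _ = ε := by ring
end
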